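/- arXiv:2409.09842 — 2 statements merged into one kernel-verified Lean document; each statement's English description precedes it below -/
import Mathlib

section
/- Let σ = (σ_1, …, σ_r) ∈ ℤ^r be a changemaker vector with n = ‖σ‖ = Σ_{i=1}^r σ_i², and suppose the integer changemaker lattice L = ⟨σ⟩^⊥ ⊆ ℤ^r admits an obtuse superbase v_0, …, v_{r−1}. Then for every index j and every coordinate index k with 1 ≤ k ≤ r, one has (v_j)_k² + σ_k² ≤ n, i.e. |(v_j)_k| ≤ √(n − σ_k²). -/
/-- The standard dot product on `ℤ^s`. -/
def dotInt {s : ℕ} (x y : Fin s → ℤ) : ℤ := ∑ i, x i * y i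

/-- `σ` is a changemaker vector: `σ 0 = 1` (the first coordinate, 1-based `σ_1`) and
`σ_{i-1} ≤ σ_i ≤ 1 + σ_1 + ⋯ + σ_{i-1}` for all later coordinates. -/
def IsChangemaker {r : ℕ} (σ : Fin r → ℤ) : Prop :=
  (∀ i : Fin r, i.val = 0 → σ i = 1) ∧
  ∀ i : Fin r, 0 < i.val →
    σ ⟨i.val - 1, lt_of_le_of_lt (Nat.sub_le _ _) i.isLt⟩ ≤ σ i ∧
    σ i ≤ 1 + ∑ j ∈ Finset.univ.filter (fun j : Fin r => j < i), σ j

/-- `v` is an obtuse superbase of the sublattice `L ⊆ ℤ^s`: all its members lie in `L`,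
they span `L` over `ℤ`, they have pairwise nonpositive dot products, and they sum to zero. -/
def IsObtuseSuperbase {s d : ℕ} (L : Set (Fin s → ℤ)) (v : Fin d → (Fin s → ℤ)) : Prop :=
  (∀ i, v i ∈ L) ∧
  (∀ x ∈ L, x ∈ Submodule.span ℤ (Set.range v)) ∧
  (∀ i j, i ≠ j → dotInt (v i) (v j) ≤ 0) ∧
  (∑ i, v i) = 0

/-- `v` is a nonzero vector of the changemaker lattice `⟨σ⟩^⊥` which is irreducible:
whenever `v = x + y` with `x, y` nonzero members of the lattice, `x · y ≤ -1`. -/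
def IsIrreducibleVec {r : ℕ} (σ : Fin r → ℤ) (v : Fin r → ℤ) : Prop :=
  v ≠ 0 ∧ ∀ x y : Fin r → ℤ, dotInt σ x = 0 → dotInt σ y = 0 → x ≠ 0 → y ≠ 0 →
    x + y = v → dotInt x y ≤ -1

/-- A changemaker vector is tight if some coefficient `σ_k` (with `k ≥ 2`, 1-based)
equals `1 + σ_1 + ⋯ + σ_{k-1}`. -/
def IsTightCM {r : ℕ} (σ : Fin r → ℤ) : Prop :=
  ∃ k : Fin r, 0 < k.val ∧
    σ k = 1 + ∑ j ∈ Finset.univ.filter (fun j : Fin r => j < k), σ j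

/-- A changemaker vector is very slack if its last coordinate is at least `2` and
`σ_k ≤ σ_1 + ⋯ + σ_{k-1} - 1` for every `k` with `σ_k > 1`. -/
def IsVerySlack {r : ℕ} (σ : Fin r → ℤ) : Prop :=
  IsChangemaker σ ∧ (∀ i : Fin r, i.val = r - 1 → 2 ≤ σ i) ∧
  ∀ k : Fin r, 1 < σ k →
    σ k ≤ (∑ j ∈ Finset.univ.filter (fun j : Fin r => j < k), σ j) - 1

/-!
Let `G` be the Gram matrix of the superbase vectors other than `v j`. It is positive definite, its
off-diagonal entries are `≤ 0`, its row sums `-v_a ⬝ v_j` are `≥ 0`, its entries sum to `|v_j|²`,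
and its diagonal entries are `≥ 2` because a nonzero vector orthogonal to a vector without zero
entries has at least two nonzero coordinates. Since `σ 0 = 1`, dropping the first coordinate maps
`⟨σ⟩^⊥` isomorphically onto `ℤ^(r-1)`, so `det G = det (1 + σ'σ'ᵀ) = σ ⬝ σ = n` with
`σ' = (σ_2, …, σ_r)`. Expanding the
determinant along a row with positive row sum and inducting on the size shows that such a matrix
has determinant at least the sum of its entries; hence `|v_j|² ≤ n`. Cauchy–Schwarz in `⟨σ⟩^⊥`
then bounds each coordinate: `n (v_j)_k² ≤ |v_j|² (n - σ_k²) ≤ n (n - σ_k²)`.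
-/

open Matrix Finset

namespace Matrix

variable {R : Type*} [CommRing R]

structure IsDiagDominantZMatrix [LinearOrder R] {n : Type*} [Fintype n] (M : Matrix n n R) :
    Prop where
  off_diag_nonpos : ∀ k l, k ≠ l → M k l ≤ 0
  sum_row_nonneg : ∀ k, 0 ≤ ∑ l, M k l

theorem det_eq_zero_of_sum_row_eq_zero [IsDomain R] {n : Type*} [Fintype n] [DecidableEq n]
    [Nonempty n] {M : Matrix n n R} (h : ∀ k, ∑ l, M k l = 0) : M.det = 0 :=
  exists_mulVec_eq_zero_iff.mp
    ⟨1, one_ne_zero, funext fun k => by simpa [mulVec, dotProduct] using h k⟩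

theorem sum_submatrix_succAbove {m : ℕ} (M : Matrix (Fin (m + 1)) (Fin (m + 1)) R)
    (i : Fin (m + 1)) (k : Fin m) :
    ∑ l, M.submatrix i.succAbove i.succAbove k l
      = ∑ l, M (i.succAbove k) l - M (i.succAbove k) i := by
  rw [Fin.sum_univ_succAbove (M (i.succAbove k)) i]
  simp

theorem sum_sum_submatrix_succAbove {m : ℕ} (M : Matrix (Fin (m + 1)) (Fin (m + 1)) R)
    (i : Fin (m + 1)) :
    ∑ k, ∑ l, M.submatrix i.succAbove i.succAbove k l
      = ∑ k, ∑ l, M k l - ∑ l, M i l - ∑ k, M k i + M i i := by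
  simp only [sum_submatrix_succAbove, Finset.sum_sub_distrib]
  rw [Fin.sum_univ_succAbove (fun k => ∑ l, M k l) i, Fin.sum_univ_succAbove (fun k => M k i) i]
  ring

def lowerDiagByRowSum {m : ℕ} (M : Matrix (Fin (m + 1)) (Fin (m + 1)) R) (i : Fin (m + 1)) :
    Matrix (Fin (m + 1)) (Fin (m + 1)) R :=
  M.updateRow i (M i - (∑ l, M i l) • Pi.single i 1)

theorem det_eq_det_lowerDiagByRowSum_add {m : ℕ} (M : Matrix (Fin (m + 1)) (Fin (m + 1)) R)
    (i : Fin (m + 1)) :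
    M.det = (M.lowerDiagByRowSum i).det
      + (∑ l, M i l) * (M.submatrix i.succAbove i.succAbove).det := by
  conv_lhs => rw [← updateRow_eq_self M i, ← sub_add_cancel (M i) ((∑ l, M i l) • Pi.single i 1)]
  rw [det_updateRow_add, det_updateRow_smul, ← adjugate_apply,
    adjugate_fin_succ_eq_det_submatrix, ← two_mul, pow_mul, neg_one_sq, one_pow, one_mul]
  rfl

theorem sum_lowerDiagByRowSum {m : ℕ} (M : Matrix (Fin (m + 1)) (Fin (m + 1)) R)
    (i k : Fin (m + 1)) :
    ∑ l, M.lowerDiagByRowSum i k l = if k = i then 0 else ∑ l, M k l := by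
  split_ifs with hk
  · subst hk
    simp [lowerDiagByRowSum, Finset.sum_sub_distrib, Pi.single_apply]
  · simp [lowerDiagByRowSum, hk]

variable [LinearOrder R]

namespace IsDiagDominantZMatrix

section Succ

variable {m : ℕ} {M : Matrix (Fin (m + 1)) (Fin (m + 1)) R}

theorem submatrix_succAbove [IsStrictOrderedRing R] (hM : M.IsDiagDominantZMatrix)
    (i : Fin (m + 1)) : (M.submatrix i.succAbove i.succAbove).IsDiagDominantZMatrix where
  off_diag_nonpos k l hkl := hM.off_diag_nonpos _ _ (Fin.succAbove_right_injective.ne hkl)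
  sum_row_nonneg k := by
    rw [sum_submatrix_succAbove]
    linarith [hM.sum_row_nonneg (i.succAbove k),
      hM.off_diag_nonpos (i.succAbove k) i (Fin.succAbove_ne i k)]

theorem lowerDiagByRowSum (hM : M.IsDiagDominantZMatrix) (i : Fin (m + 1)) :
    (M.lowerDiagByRowSum i).IsDiagDominantZMatrix where
  off_diag_nonpos k l hkl := by
    rcases eq_or_ne k i with rfl | hk
    · simpa [Matrix.lowerDiagByRowSum, Pi.single_eq_of_ne' hkl] using hM.off_diag_nonpos k l hkl
    · simpa [Matrix.lowerDiagByRowSum, hk] using hM.off_diag_nonpos k l hkl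
  sum_row_nonneg k := by
    rw [sum_lowerDiagByRowSum]
    split_ifs
    exacts [le_rfl, hM.sum_row_nonneg k]

end Succ

theorem det_nonneg [IsStrictOrderedRing R] :
    ∀ {m : ℕ} {M : Matrix (Fin m) (Fin m) R}, M.IsDiagDominantZMatrix → 0 ≤ M.det
  | 0, M, _ => by simp
  | m + 1, M, hM => by
    suffices key : ∀ s : Finset (Fin (m + 1)), ∀ M : Matrix (Fin (m + 1)) (Fin (m + 1)) R,
        M.IsDiagDominantZMatrix → (∀ k ∉ s, ∑ l, M k l = 0) → 0 ≤ M.det from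
      key univ M hM (by simp)
    intro s
    induction s using Finset.induction_on with
    | empty =>
      exact fun M _ h => (det_eq_zero_of_sum_row_eq_zero fun k => h k (notMem_empty k)).ge
    | insert i s _ ih =>
      intro M hM h
      have hlow := ih (M.lowerDiagByRowSum i) (hM.lowerDiagByRowSum i) fun k hk => by
        rw [sum_lowerDiagByRowSum]
        split_ifs with hki
        · rfl
        · exact h k (by simp [hki, hk])
      have hsub := (hM.submatrix_succAbove i).det_nonneg
      rw [det_eq_det_lowerDiagByRowSum_add]
      exact add_nonneg hlow (mul_nonneg (hM.sum_row_nonneg i) hsub)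

theorem sum_le_det_and_two_le_det :
    ∀ {m : ℕ} {M : Matrix (Fin (m + 1)) (Fin (m + 1)) ℤ}, M.IsDiagDominantZMatrix → M.PosDef →
      (∀ k, 2 ≤ M k k) → ∑ k, ∑ l, M k l ≤ M.det ∧ 2 ≤ M.det
  | 0, M, _, _, hdiag => by simpa using hdiag 0
  | m + 1, M, hM, hpos, hdiag => by
    obtain ⟨i, -, hi⟩ : ∃ i ∈ univ, 0 < ∑ l, M i l := by
      refine exists_lt_of_sum_lt (f := 0) ?_
      simpa [dotProduct, mulVec] using hpos.dotProduct_mulVec_pos (x := 1) one_ne_zero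
    have hsymm : ∀ k, M k i = M i k := fun k => hpos.isHermitian.apply i k
    obtain ⟨ih_sum, ih_two⟩ := (hM.submatrix_succAbove i).sum_le_det_and_two_le_det
      (hpos.submatrix Fin.succAbove_right_injective) fun k => hdiag _
    have hsum := sum_sum_submatrix_succAbove M i
    simp only [hsymm] at hsum
    have hlow := (hM.lowerDiagByRowSum i).det_nonneg
    have hii := hdiag i
    rw [det_eq_det_lowerDiagByRowSum_add M i]
    set a := ∑ l, M i l
    -- with `M₂` the minor at `i` and `S` the entry sum of `M`:
    -- `a * det M₂ ≥ a * max (S - 2a + 2) 2 ≥ S`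
    constructor
    · rcases le_or_gt (∑ k, ∑ l, M k l) (2 * a) with hS | hS
      · nlinarith
      · nlinarith
    · nlinarith

theorem sum_le_det {m : ℕ} {M : Matrix (Fin m) (Fin m) ℤ} (hM : M.IsDiagDominantZMatrix)
    (hpos : M.PosDef) (hdiag : ∀ k, 2 ≤ M k k) : ∑ k, ∑ l, M k l ≤ M.det := by
  cases m with
  | zero => simp
  | succ m => exact (hM.sum_le_det_and_two_le_det hpos hdiag).1

end IsDiagDominantZMatrix

end Matrix

theorem IsChangemaker.one_le {r : ℕ} {σ : Fin r → ℤ} (h : IsChangemaker σ) (t : Fin r) :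
    1 ≤ σ t := by
  obtain ⟨t, ht⟩ := t
  induction t with
  | zero => exact (h.1 _ rfl).ge
  | succ t ih => exact (ih (by omega)).trans (h.2 ⟨t + 1, ht⟩ t.succ_pos).1

theorem two_le_dotProduct_self_of_dotProduct_eq_zero {ι : Type*} [Fintype ι] {σ u : ι → ℤ}
    (hσ : ∀ t, σ t ≠ 0) (horth : σ ⬝ᵥ u = 0) (hu : u ≠ 0) : 2 ≤ u ⬝ᵥ u := by
  obtain ⟨s, hs⟩ := Function.ne_iff.mp hu
  obtain ⟨t, hts, ht⟩ : ∃ t, t ≠ s ∧ u t ≠ 0 := by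
    by_contra! h
    rw [dotProduct, Finset.sum_eq_single s (fun t _ hts => by simp [h t hts]) (by simp)] at horth
    exact mul_ne_zero (hσ s) hs horth
  have hpair : u s * u s + u t * u t ≤ u ⬝ᵥ u :=
    add_le_sum (fun i _ => mul_self_nonneg (u i)) (mem_univ s) (mem_univ t) hts.symm
  have := Int.one_le_abs hs
  have := Int.one_le_abs ht
  nlinarith [abs_mul_abs_self (u s), abs_mul_abs_self (u t)]

theorem sq_add_sq_le_of_dotProduct_eq_zero {ι R : Type*} [Fintype ι] [DecidableEq ι]
    [CommRing R] [LinearOrder R] [IsStrictOrderedRing R] {σ x : ι → R}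
    (horth : σ ⬝ᵥ x = 0) (hx : x ⬝ᵥ x ≤ σ ⬝ᵥ σ) (k : ι) :
    x k ^ 2 + σ k ^ 2 ≤ σ ⬝ᵥ σ := by
  set n := σ ⬝ᵥ σ
  have hsq : ∀ y : ι → R, y k ^ 2 ≤ y ⬝ᵥ y := fun y => by
    simpa [sq, dotProduct] using single_le_sum (fun i _ => mul_self_nonneg (y i)) (mem_univ k)
  have hσk : σ k ^ 2 ≤ n := hsq σ
  rcases (sq_nonneg (σ k)).trans hσk |>.eq_or_lt with hn | hn
  · linarith [hsq x]
  -- Cauchy–Schwarz against `n eₖ - σₖ σ`, the projection of `n eₖ` onto `σ^⊥`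
  set u := n • Pi.single k 1 - σ k • σ
  have hxu : x ⬝ᵥ u = n * x k := by
    simp [u, dotProduct_sub, dotProduct_smul, dotProduct_comm x σ, horth]
  have huu : u ⬝ᵥ u = n * (n - σ k ^ 2) := by
    simp only [u, n, dotProduct_sub, sub_dotProduct, dotProduct_smul, smul_dotProduct,
      dotProduct_single, single_dotProduct, Pi.sub_apply, Pi.smul_apply, Pi.single_eq_same,
      smul_eq_mul, mul_one, one_mul]
    ring
  have hCS : (x ⬝ᵥ u) ^ 2 ≤ (x ⬝ᵥ x) * (u ⬝ᵥ u) := by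
    simpa [dotProduct, sq] using sum_mul_sq_le_sq_mul_sq univ x u
  rw [hxu, huu] at hCS
  have hnorm : (x ⬝ᵥ x) * (n * (n - σ k ^ 2)) ≤ n * (n * (n - σ k ^ 2)) :=
    mul_le_mul_of_nonneg_right hx (mul_nonneg hn.le (sub_nonneg.mpr hσk))
  have : x k ^ 2 ≤ n - σ k ^ 2 :=
    le_of_mul_le_mul_left (by linarith) (mul_pos hn hn)
  linarith

section OrthogonalComplement

variable {m : ℕ} {σ : Fin (m + 1) → ℤ}

theorem dotProduct_eq_mul_add_dotProduct_tail {R : Type*} [CommRing R] (x y : Fin (m + 1) → R) :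
    x ⬝ᵥ y = x 0 * y 0 + Fin.tail x ⬝ᵥ Fin.tail y :=
  Fin.sum_univ_succ _

theorem dotProduct_eq_of_dotProduct_eq_zero (hσ0 : σ 0 = 1) {x y : Fin (m + 1) → ℤ}
    (hx : σ ⬝ᵥ x = 0) (hy : σ ⬝ᵥ y = 0) :
    x ⬝ᵥ y = Fin.tail x ⬝ᵥ Fin.tail y
      + (Fin.tail x ⬝ᵥ Fin.tail σ) * (Fin.tail y ⬝ᵥ Fin.tail σ) := by
  rw [dotProduct_eq_mul_add_dotProduct_tail, hσ0, one_mul, dotProduct_comm] at hx hy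
  rw [dotProduct_eq_mul_add_dotProduct_tail]
  linear_combination y 0 * hx - (Fin.tail x ⬝ᵥ Fin.tail σ) * hy

variable {V : Matrix (Fin m) (Fin (m + 1)) ℤ}

theorem mul_transpose_eq_of_dotProduct_eq_zero (hσ0 : σ 0 = 1) (horth : ∀ a, σ ⬝ᵥ V a = 0) :
    V * Vᵀ = V.submatrix id Fin.succ * (1 + vecMulVec (Fin.tail σ) (Fin.tail σ))
      * (V.submatrix id Fin.succ)ᵀ := by
  ext a b
  rw [Matrix.mul_add, Matrix.add_mul, Matrix.mul_one, mul_vecMulVec, vecMulVec_mul,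
    vecMul_transpose]
  simp only [Matrix.add_apply, vecMulVec_apply, mul_apply, transpose_apply]
  exact dotProduct_eq_of_dotProduct_eq_zero hσ0 (horth a) (horth b)

theorem isUnit_submatrix_succ (hσ0 : σ 0 = 1)
    (hspan : ∀ x, σ ⬝ᵥ x = 0 → x ∈ Submodule.span ℤ (Set.range V)) :
    IsUnit (V.submatrix id Fin.succ) := by
  rw [← vecMul_surjective_iff_isUnit]
  intro y
  have hx : σ ⬝ᵥ Fin.cons (-(Fin.tail σ ⬝ᵥ y)) y = 0 := by
    rw [dotProduct_eq_mul_add_dotProduct_tail, hσ0]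
    simp
  obtain ⟨c, hc⟩ := (Submodule.mem_span_range_iff_exists_fun ℤ).mp (hspan _ hx)
  refine ⟨c, funext fun l => ?_⟩
  simpa [vecMul, dotProduct, Finset.sum_apply, mul_comm] using congrFun hc l.succ

theorem det_mul_transpose_eq_dotProduct_self (hσ0 : σ 0 = 1) (horth : ∀ a, σ ⬝ᵥ V a = 0)
    (hspan : ∀ x, σ ⬝ᵥ x = 0 → x ∈ Submodule.span ℤ (Set.range V)) :
    (V * Vᵀ).det = σ ⬝ᵥ σ := by
  have hunit := (isUnit_iff_isUnit_det _).mp (isUnit_submatrix_succ hσ0 hspan)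
  rw [mul_transpose_eq_of_dotProduct_eq_zero hσ0 horth, det_mul, det_mul, det_transpose,
    vecMulVec_eq Unit, det_one_add_replicateCol_mul_replicateRow,
    dotProduct_eq_mul_add_dotProduct_tail σ, hσ0]
  rcases Int.isUnit_iff.mp hunit with h | h <;> simp [h]

theorem posDef_mul_transpose (hσ0 : σ 0 = 1) (horth : ∀ a, σ ⬝ᵥ V a = 0)
    (hspan : ∀ x, σ ⬝ᵥ x = 0 → x ∈ Submodule.span ℤ (Set.range V)) :
    (V * Vᵀ).PosDef := by
  rw [mul_transpose_eq_of_dotProduct_eq_zero hσ0 horth, ← conjTranspose_eq_transpose_of_trivial]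
  refine PosDef.mul_mul_conjTranspose_same ?_
    (vecMul_injective_of_isUnit (isUnit_submatrix_succ hσ0 hspan))
  exact PosDef.one.add_posSemidef (by simpa using posSemidef_vecMulVec_star_self (Fin.tail σ))

end OrthogonalComplement

theorem IsObtuseSuperbase.dotInt_self_le {m : ℕ} {σ : Fin (m + 1) → ℤ} (hσ0 : σ 0 = 1)
    (hσ : ∀ t, σ t ≠ 0) {v : Fin (m + 1) → Fin (m + 1) → ℤ}
    (hv : IsObtuseSuperbase {x | dotInt σ x = 0} v) (j : Fin (m + 1)) :
    dotInt (v j) (v j) ≤ σ ⬝ᵥ σ := by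
  obtain ⟨hmem, hspan, hobtuse, hsum⟩ := hv
  -- dropping `v j` leaves a basis of `σ^⊥`
  set V : Matrix (Fin m) (Fin (m + 1)) ℤ := fun a => v (j.succAbove a)
  have hVsum : ∑ a, V a = -v j := by
    rw [Fin.sum_univ_succAbove _ j] at hsum
    exact eq_neg_of_add_eq_zero_right hsum
  have horth : ∀ a, σ ⬝ᵥ V a = 0 := fun a => hmem _
  have hVspan : ∀ x, σ ⬝ᵥ x = 0 → x ∈ Submodule.span ℤ (Set.range V) := by
    refine fun x hx => Submodule.span_le.mpr ?_ (hspan x hx)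
    rintro _ ⟨i, rfl⟩
    rcases Fin.eq_self_or_eq_succAbove j i with rfl | ⟨a, rfl⟩
    · rw [← neg_neg (v i), ← hVsum]
      exact neg_mem (sum_mem fun a _ => Submodule.subset_span ⟨a, rfl⟩)
    · exact Submodule.subset_span ⟨a, rfl⟩
  have hpos := posDef_mul_transpose hσ0 horth hVspan
  have hrow : ∀ a, ∑ b, (V * Vᵀ) a b = -(V a ⬝ᵥ v j) := fun a => by
    rw [← dotProduct_neg, ← hVsum, dotProduct_sum]
    rfl
  have hM : (V * Vᵀ).IsDiagDominantZMatrix :=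
    ⟨fun a b hab => hobtuse _ _ (Fin.succAbove_right_injective.ne hab),
      fun a => by
        rw [hrow]
        exact neg_nonneg.mpr (hobtuse _ _ (Fin.succAbove_ne j a))⟩
  have hdiag : ∀ a, 2 ≤ (V * Vᵀ) a a := fun a =>
    two_le_dotProduct_self_of_dotProduct_eq_zero (u := V a) hσ (horth a) fun h =>
      (hpos.diag_pos (i := a)).ne' (show V a ⬝ᵥ V a = 0 by rw [h, zero_dotProduct])
  calc dotInt (v j) (v j) = -((∑ a, V a) ⬝ᵥ v j) := by
        rw [hVsum, neg_dotProduct, neg_neg]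
        rfl
    _ = ∑ a, ∑ b, (V * Vᵀ) a b := by
        rw [sum_dotProduct (u := V)]
        simp only [hrow, sum_neg_distrib]
    _ ≤ (V * Vᵀ).det := hM.sum_le_det hpos hdiag
    _ = σ ⬝ᵥ σ := det_mul_transpose_eq_dotProduct_self hσ0 horth hVspan

theorem obtuse_superbase_cauchy_schwarz_bound_general
    (r : ℕ) (σ : Fin r → ℤ) (hcm : IsChangemaker σ)
    (v : Fin r → (Fin r → ℤ))
    (hv : IsObtuseSuperbase {x : Fin r → ℤ | dotInt σ x = 0} v) :
    ∀ j k : Fin r, (v j k) ^ 2 + (σ k) ^ 2 ≤ ∑ i, (σ i) ^ 2 := by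
  intro j k
  obtain ⟨m, rfl⟩ := Nat.exists_eq_succ_of_ne_zero j.pos.ne'
  have hσ : ∀ t, σ t ≠ 0 := fun t => (one_pos.trans_le (hcm.one_le t)).ne'
  simpa only [dotProduct, sq] using
    sq_add_sq_le_of_dotProduct_eq_zero (hv.1 j) (hv.dotInt_self_le (hcm.1 0 rfl) hσ j) k

theorem obtuse_superbase_cauchy_schwarz_bound
    (r : ℕ) (hr : 0 < r) (σ : Fin r → ℤ) (hcm : IsChangemaker σ)
    (v : Fin r → (Fin r → ℤ))
    (hv : IsObtuseSuperbase {x : Fin r → ℤ | dotInt σ x = 0} v) :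
    ∀ j k : Fin r, (v j k) ^ 2 + (σ k) ^ 2 ≤ ∑ i, (σ i) ^ 2 :=
  obtuse_superbase_cauchy_schwarz_bound_general r σ hcm v hv
end

section
/- Let σ = (σ_1, …, σ_r) ∈ ℤ^r be a changemaker vector with σ_r ≥ 2, let L = ⟨σ⟩^⊥ ⊆ ℤ^r be the associated integer changemaker lattice, and let z ∈ L be irreducible. Then: (ii) if σ_k > 1 is not tight and A ⊆ {1, …, k−1} is any subset with σ_k = Σ_{i∈A} σ_i, then |z_k| ≤ Σ_{i∈A}(|z_i| + 1); and (iii) if σ_k is tight, then |z_k| ≤ 5 + Σ_{i=1}^{k−1}(|z_i| + 1). -/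
open Finset

theorem exists_bounded_coeffs_sum_eq {ι : Type*} [LinearOrder ι] {σ n : ι → ℤ} {T : Finset ι}
    (hσ : ∀ i ∈ T, 0 < σ i) (hn : ∀ i ∈ T, 0 ≤ n i)
    (hchain : ∀ i ∈ T, σ i ≤ 1 + ∑ j ∈ T with j < i, σ j * n j)
    {R : ℤ} (hR : 0 ≤ R) (hRT : R ≤ ∑ j ∈ T, σ j * n j) :
    ∃ c : ι → ℤ, (∀ j ∉ T, c j = 0) ∧ (∀ j ∈ T, 0 ≤ c j ∧ c j ≤ n j) ∧
      ∑ j ∈ T, σ j * c j = R := by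
  induction T using Finset.induction_on_max generalizing R with
  | empty => exact ⟨0, fun _ _ => rfl, by simp, by simp at hRT ⊢; omega⟩
  | insert a s hlt ih =>
    have has : a ∉ s := fun h => lt_irrefl a (hlt a h)
    have hσa := hσ a (mem_insert_self a s)
    have hsum : ∑ j ∈ insert a s, σ j * n j = σ a * n a + ∑ j ∈ s, σ j * n j := sum_insert has
    have hfilter : ∀ i ∈ s, {j ∈ insert a s | j < i} = {j ∈ s | j < i} := fun i hi => by
      rw [filter_insert, if_neg (not_lt.2 (hlt i hi).le)]
    have hchain_a : σ a ≤ 1 + ∑ j ∈ s, σ j * n j := by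
      simpa [filter_insert, filter_true_of_mem hlt] using hchain a (mem_insert_self a s)
    -- greedy step: use the largest coefficient `σ a` as often as allowed
    set q := min (n a) (R / σ a) with hq
    have hq0 : 0 ≤ q := le_min (hn a (mem_insert_self a s)) (Int.ediv_nonneg hR hσa.le)
    have hqR : σ a * q ≤ R := calc
      σ a * q ≤ σ a * (R / σ a) := mul_le_mul_of_nonneg_left (min_le_right _ _) hσa.le
      _ ≤ R := by linarith [Int.ediv_mul_le R hσa.ne']
    have hrest : R - σ a * q ≤ ∑ j ∈ s, σ j * n j := by
      rcases le_total (n a) (R / σ a) with h | h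
      · rw [hq, min_eq_left h]; linarith
      · rw [hq, min_eq_right h, ← Int.emod_def]; linarith [Int.emod_lt_of_pos R hσa]
    obtain ⟨c, hc0, hcn, hcR⟩ := ih (fun i hi => hσ i (mem_insert_of_mem hi))
      (fun i hi => hn i (mem_insert_of_mem hi))
      (fun i hi => hfilter i hi ▸ hchain i (mem_insert_of_mem hi)) (by linarith) hrest
    refine ⟨Function.update c a q, fun j hj => ?_, fun j hj => ?_, ?_⟩
    · rw [mem_insert, not_or] at hj
      rw [Function.update_of_ne hj.1, hc0 j hj.2]
    · rcases mem_insert.1 hj with rfl | hj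
      · simpa using ⟨hq0, min_le_left _ _⟩
      · rw [Function.update_of_ne (ne_of_mem_of_not_mem hj has)]; exact hcn j hj
    · rw [sum_insert has, Function.update_self,
        sum_congr rfl fun j hj => by rw [Function.update_of_ne (ne_of_mem_of_not_mem hj has)], hcR]
      ring

section Changemaker

variable {r : ℕ} {σ : Fin r → ℤ} {t : Fin r}

theorem IsChangemaker.monotone (hσ : IsChangemaker σ) : Monotone σ := by
  cases r with
  | zero => exact fun i => i.elim0
  | succ n =>
    exact Fin.monotone_iff_le_succ.2 fun i => (hσ.2 i.succ (Nat.succ_pos _)).1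

theorem IsChangemaker.pos (hσ : IsChangemaker σ) (i : Fin r) : 0 < σ i := by
  have h0 : σ ⟨0, i.pos⟩ = 1 := hσ.1 _ rfl
  have := hσ.monotone (show (⟨0, i.pos⟩ : Fin r) ≤ i from Nat.zero_le _)
  omega

theorem IsChangemaker.le_one_add_sum_Iio (hσ : IsChangemaker σ) (i : Fin r) :
    σ i ≤ 1 + ∑ j ∈ Iio i, σ j := by
  rcases Nat.eq_zero_or_pos i.val with h | h
  · rw [hσ.1 i h, le_add_iff_nonneg_right]
    exact sum_nonneg fun j _ => (hσ.pos j).le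
  · simpa [filter_gt_eq_Iio] using (hσ.2 i h).2

theorem IsChangemaker.one_le_sum_Iio (hσ : IsChangemaker σ) (ht : 0 < t.val) :
    1 ≤ ∑ j ∈ Iio t, σ j := by
  have h0 : σ ⟨0, t.pos⟩ = 1 := hσ.1 _ rfl
  rw [← h0]
  exact single_le_sum (fun j _ => (hσ.pos j).le) (mem_Iio.2 ht)

theorem IsChangemaker.exists_zero_one_sum_eq (hσ : IsChangemaker σ) (m : Fin r) {R : ℤ}
    (hR : 0 ≤ R) (hRm : R ≤ ∑ j ∈ Iio m, σ j) :
    ∃ c : Fin r → ℤ, (∀ j ∉ Iio m, c j = 0) ∧ (∀ j, c j = 0 ∨ c j = 1) ∧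
      ∑ j ∈ Iio m, σ j * c j = R := by
  obtain ⟨c, hc0, hc1, hcσ⟩ := exists_bounded_coeffs_sum_eq (T := Iio m) (n := 1)
    (fun i _ => hσ.pos i) (fun _ _ => zero_le_one)
    (fun i hi => by simpa [Iio_filter_lt, (mem_Iio.1 hi).le] using hσ.le_one_add_sum_Iio i)
    hR (by simpa using hRm)
  refine ⟨c, hc0, fun j => ?_, hcσ⟩
  by_cases hj : j ∈ Iio m
  · have := hc1 j hj; simp only [Pi.one_apply] at this; omega
  · exact .inl (hc0 j hj)

theorem IsChangemaker.tight_add_sum_le_sum_mul (hσ : IsChangemaker σ) (ht : 0 < t.val)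
    (htight : σ t = 1 + ∑ j ∈ Iio t, σ j) {S : Finset (Fin r)} (hS : Iio t ⊆ S)
    {n : Fin r → ℤ} (hn : ∀ j ∈ S, 1 ≤ n j) (hn3 : ∀ j ∈ Iio t, 3 ≤ n j) :
    σ t + ∑ j ∈ S, σ j ≤ ∑ j ∈ S, σ j * n j := by
  have hlow : 2 * ∑ j ∈ Iio t, σ j ≤ ∑ j ∈ S, σ j * (n j - 1) := calc
    2 * ∑ j ∈ Iio t, σ j = ∑ j ∈ Iio t, σ j * 2 := by rw [mul_sum]; ring_nf
    _ ≤ ∑ j ∈ Iio t, σ j * (n j - 1) := sum_le_sum fun j hj =>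
      mul_le_mul_of_nonneg_left (by linarith [hn3 j hj]) (hσ.pos j).le
    _ ≤ ∑ j ∈ S, σ j * (n j - 1) := sum_le_sum_of_subset_of_nonneg hS fun j hj _ =>
      mul_nonneg (hσ.pos j).le (by linarith [hn j hj])
  have hsplit : ∑ j ∈ S, σ j * (n j - 1) = ∑ j ∈ S, σ j * n j - ∑ j ∈ S, σ j := by
    rw [← sum_sub_distrib]; simp only [mul_sub, mul_one]
  linarith [hσ.one_le_sum_Iio ht]

theorem IsChangemaker.le_one_add_sum_erase_tight (hσ : IsChangemaker σ) (ht : 0 < t.val)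
    (htight : σ t = 1 + ∑ j ∈ Iio t, σ j) {u : Fin r} {n : Fin r → ℤ}
    (hn : ∀ j < u, j ≠ t → 3 ≤ n j) {i : Fin r} (hi : i ∈ (Iio u).erase t) :
    σ i ≤ 1 + ∑ j ∈ (Iio u).erase t with j < i, σ j * n j := by
  have hiu := mem_Iio.1 (mem_of_mem_erase hi)
  have hfilter : {j ∈ (Iio u).erase t | j < i} = (Iio i).erase t := by
    ext j; simp only [mem_filter, mem_erase, mem_Iio]
    exact ⟨fun h => ⟨h.1.1, h.2⟩, fun h => ⟨⟨h.1, h.2.trans hiu⟩, h.2⟩⟩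
  rw [hfilter]
  rcases (ne_of_mem_erase hi).lt_or_gt with hlt | hgt
  · rw [erase_eq_of_notMem (by simpa using hlt.le)]
    calc σ i ≤ 1 + ∑ j ∈ Iio i, σ j := hσ.le_one_add_sum_Iio i
      _ ≤ 1 + ∑ j ∈ Iio i, σ j * n j := by
        gcongr with j hj
        have hji := mem_Iio.1 hj
        nlinarith [hσ.pos j, hn j (hji.trans hiu) (hji.trans hlt).ne]
  · have hsplit := add_sum_erase (Iio i) σ (mem_Iio.2 hgt)
    have := hσ.tight_add_sum_le_sum_mul ht htight (S := (Iio i).erase t)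
      (fun j hj => mem_erase.2 ⟨(mem_Iio.1 hj).ne, mem_Iio.2 ((mem_Iio.1 hj).trans hgt)⟩)
      (fun j hj => by
        linarith [hn j ((mem_Iio.1 (mem_of_mem_erase hj)).trans hiu) (ne_of_mem_erase hj)])
      (fun j hj => hn j (((mem_Iio.1 hj).trans hgt).trans hiu) (mem_Iio.1 hj).ne)
    linarith [hσ.le_one_add_sum_Iio i]

theorem IsChangemaker.exists_eq_mul_tight_add_sum (hσ : IsChangemaker σ) (ht : 0 < t.val)
    (htight : σ t = 1 + ∑ j ∈ Iio t, σ j) {u : Fin r} (htu : t < u) {n : Fin r → ℤ}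
    (hn : ∀ j < u, j ≠ t → 3 ≤ n j) {N : ℤ} (hN : 4 ≤ N) :
    ∃ k : ℤ, ∃ c : Fin r → ℤ, 1 ≤ k ∧ 2 * k ≤ N ∧ (∀ j ∉ (Iio u).erase t, c j = 0) ∧
      (∀ j ∈ (Iio u).erase t, 0 ≤ c j ∧ c j ≤ n j) ∧
      σ u = k * σ t + ∑ j ∈ (Iio u).erase t, σ j * c j := by
  set T := (Iio u).erase t
  have hσt := hσ.pos t
  have hTn : ∀ j ∈ T, 3 ≤ n j := fun j hj =>
    hn j (mem_Iio.1 (mem_of_mem_erase hj)) (ne_of_mem_erase hj)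
  have hlowT : Iio t ⊆ T := fun j hj =>
    mem_erase.2 ⟨(mem_Iio.1 hj).ne, mem_Iio.2 ((mem_Iio.1 hj).trans htu)⟩
  have hT : σ t + ∑ j ∈ T, σ j ≤ ∑ j ∈ T, σ j * n j :=
    hσ.tight_add_sum_le_sum_mul ht htight hlowT (fun j hj => by linarith [hTn j hj])
      fun j hj => hTn j (hlowT hj)
  have hσT : 0 ≤ ∑ j ∈ T, σ j := sum_nonneg fun j _ => (hσ.pos j).le
  have hσu : σ u ≤ 1 + σ t + ∑ j ∈ T, σ j := by
    linarith [hσ.le_one_add_sum_Iio u, add_sum_erase (Iio u) σ (mem_Iio.2 htu)]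
  set k := min (σ u / σ t) (N / 2) with hk
  have hk1 : 1 ≤ k := le_min
    ((Int.le_ediv_iff_mul_le hσt).2 (by linarith [hσ.monotone htu.le])) (by omega)
  have hkσ : k * σ t ≤ σ u := calc
    k * σ t ≤ σ u / σ t * σ t := mul_le_mul_of_nonneg_right (min_le_left _ _) hσt.le
    _ ≤ σ u := Int.ediv_mul_le _ hσt.ne'
  have hcap : σ u - k * σ t ≤ ∑ j ∈ T, σ j * n j := by
    rcases le_total (σ u / σ t) (N / 2) with h | h
    · rw [hk, min_eq_left h, mul_comm, ← Int.emod_def]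
      linarith [Int.emod_lt_of_pos (σ u) hσt]
    · have : 2 ≤ k := by rw [hk, min_eq_right h]; omega
      nlinarith
  obtain ⟨c, hc0, hcn, hcσ⟩ := exists_bounded_coeffs_sum_eq (fun i _ => hσ.pos i)
    (fun j hj => by linarith [hTn j hj]) (fun i hi => hσ.le_one_add_sum_erase_tight ht htight hn hi)
    (by linarith) hcap
  exact ⟨k, c, hk1, by omega, hc0, hcn, by linarith⟩

end Changemaker

theorem exists_gt_le_two_of_dotProduct_eq_zero {ι : Type*} [Fintype ι] [LinearOrder ι]
    {σ z : ι → ℤ} (hσ : ∀ j, 0 < σ j) (hz : σ ⬝ᵥ z = 0) {t : ι} (hle : ∀ j ≤ t, 3 ≤ z j) :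
    ∃ u, t < u ∧ z u ≤ 2 ∧ ∀ j, t < j → j < u → 3 ≤ z j := by
  have hne : ({j | t < j ∧ z j ≤ 2} : Finset ι).Nonempty := by
    by_contra! h
    rw [filter_eq_empty_iff] at h
    have h3 : ∀ j, 3 ≤ z j := fun j => (le_or_gt j t).elim (hle j) fun hj => by
      by_contra! hzj; exact h (mem_univ j) ⟨hj, by omega⟩
    have hpos : 0 < σ ⬝ᵥ z :=
      sum_pos (fun j _ => mul_pos (hσ j) (by linarith [h3 j])) ⟨t, mem_univ t⟩
    omega
  obtain ⟨u, hu, hmin⟩ := exists_min_image _ id hne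
  simp only [mem_filter, mem_univ, true_and, id] at hu hmin
  exact ⟨u, hu.1, hu.2, fun j htj hju => by
    by_contra! hzj; exact (hmin j ⟨htj, by omega⟩).not_gt hju⟩

section Irreducible

variable {r : ℕ} {σ z : Fin r → ℤ}

theorem IsIrreducibleVec.neg (hirr : IsIrreducibleVec σ z) : IsIrreducibleVec σ (-z) := by
  refine ⟨neg_ne_zero.2 hirr.1, fun x y hx hy hx0 hy0 hxy => ?_⟩
  have := hirr.2 (-x) (-y) (by simpa [dotInt] using hx) (by simpa [dotInt] using hy)
    (neg_ne_zero.2 hx0) (neg_ne_zero.2 hy0) (by rw [← neg_add, hxy, neg_neg])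
  rwa [dotInt, ← dotProduct, neg_dotProduct_neg] at this

theorem IsIrreducibleVec.sub_dotProduct_lt_zero (hirr : IsIrreducibleVec σ z) (hz : σ ⬝ᵥ z = 0)
    {y : Fin r → ℤ} (hy : σ ⬝ᵥ y = 0) (hy0 : y ≠ 0) (hyz : y ≠ z) : (z - y) ⬝ᵥ y < 0 := by
  have := hirr.2 (z - y) y (by rw [dotInt, ← dotProduct, dotProduct_sub, hz, hy, sub_zero]) hy
    (sub_ne_zero.2 hyz.symm) hy0 (sub_add_cancel z y)
  exact Int.lt_of_le_sub_one this

theorem IsIrreducibleVec.le_sum_abs_add_one (hirr : IsIrreducibleVec σ z) (hz : σ ⬝ᵥ z = 0)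
    {k : Fin r} (hk : σ k ≠ 0) {A : Finset (Fin r)} (hkA : k ∉ A) (hA : σ k = ∑ i ∈ A, σ i) :
    z k ≤ ∑ i ∈ A, (|z i| + 1) := by
  by_contra! hlt
  set y : Fin r → ℤ := Pi.single k 1 - fun j => if j ∈ A then 1 else 0
  have hyk : y k = 1 := by simp [y, hkA]
  have hyA : ∀ j ∈ A, y j = -1 := fun j hj => by simp [y, hj, ne_of_mem_of_not_mem hj hkA]
  have hyout : ∀ j ∉ insert k A, y j = 0 := fun j hj => by
    rw [mem_insert, not_or] at hj; simp [y, hj.1, hj.2]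
  have hσA : σ ⬝ᵥ (fun j => if j ∈ A then 1 else 0) = ∑ j ∈ A, σ j := by simp [dotProduct]
  have hσy : σ ⬝ᵥ y = 0 := by
    simp only [y, dotProduct_sub, dotProduct_single, hσA, mul_one, hA, sub_self]
  obtain ⟨i, hi⟩ := nonempty_of_sum_ne_zero (hA ▸ hk)
  have hA1 : 1 ≤ ∑ i ∈ A, (|z i| + 1) :=
    le_trans (by simp) (single_le_sum (fun j _ => by positivity) hi)
  have hneg := hirr.sub_dotProduct_lt_zero hz hσy (fun h => by simp [h] at hyk)
    fun h => by have : z k = 1 := h ▸ hyk; omega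
  have hAsum : -∑ i ∈ A, (|z i| + 1) ≤ ∑ j ∈ A, (z j - y j) * y j := by
    rw [← sum_neg_distrib]
    exact sum_le_sum fun j hj => by rw [hyA j hj]; linarith [le_abs_self (z j)]
  have hsub : ∑ j ∈ insert k A, (z j - y j) * y j ≤ (z - y) ⬝ᵥ y :=
    sum_le_sum_of_subset_of_nonneg (subset_univ _) fun j _ hj => by simp [hyout j hj]
  rw [sum_insert hkA, hyk] at hsub
  linarith

theorem IsIrreducibleVec.le_five_add_of_tight_of_le_two (hσ : IsChangemaker σ)
    (hirr : IsIrreducibleVec σ z) (hz : σ ⬝ᵥ z = 0) {t : Fin r}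
    (htight : σ t = 1 + ∑ j ∈ Iio t, σ j) {m : Fin r} (hmt : m < t) (hzm : z m ≤ 2) :
    z t ≤ 5 + ∑ j ∈ Iio t, (|z j| + 1) := by
  by_contra! hlt
  obtain ⟨c, hc0, hc01, hcσ⟩ := hσ.exists_zero_one_sum_eq m (R := σ m - 1)
    (by linarith [hσ.pos m]) (by linarith [hσ.le_one_add_sum_Iio m])
  set y : Fin r → ℤ := Pi.single t 1 - Pi.single m 1 + fun j => if j < t then c j - 1 else 0
  have hyt : y t = 1 := by simp [y, hmt.ne']
  have hym : y m = -2 := by simp [y, hmt.ne, hmt, hc0 m (by simp)]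
  have hylow : ∀ j ∈ (Iio t).erase m, y j = c j - 1 := fun j hj => by
    have hjt := mem_Iio.1 (mem_of_mem_erase hj)
    simp [y, hjt.ne, hjt, ne_of_mem_erase hj]
  have hyout : ∀ j ∉ insert t (Iio t), y j = 0 := fun j hj => by
    rw [mem_insert, not_or, mem_Iio] at hj
    simp [y, hj.1, hj.2, (lt_of_lt_of_le hmt (not_lt.1 hj.2)).ne']
  have hσc : ∑ j ∈ Iio t, σ j * c j = σ m - 1 := by
    rw [← hcσ]
    exact (sum_subset (Iio_subset_Iio hmt.le) fun j _ hj => by simp [hc0 j hj]).symm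
  have hσy : σ ⬝ᵥ y = 0 := by
    have hσlow : σ ⬝ᵥ (fun j => if j < t then c j - 1 else 0) = ∑ j ∈ Iio t, σ j * (c j - 1) := by
      simp [dotProduct, mul_ite, sum_ite, filter_gt_eq_Iio]
    simp only [y, dotProduct_add, dotProduct_sub, dotProduct_single, hσlow, mul_sub,
      sum_sub_distrib, mul_one, hσc]
    linarith
  have hneg := hirr.sub_dotProduct_lt_zero hz hσy (fun h => by simp [h] at hyt)
    fun h => by
      have : z t = 1 := h ▸ hyt
      linarith [sum_nonneg fun j (_ : j ∈ Iio t) => (by positivity : (0 : ℤ) ≤ |z j| + 1)]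
  have hrest : -∑ j ∈ (Iio t).erase m, (|z j| + 1) ≤ ∑ j ∈ (Iio t).erase m, (z j - y j) * y j := by
    rw [← sum_neg_distrib]
    refine sum_le_sum fun j hj => ?_
    rw [hylow j hj]
    rcases hc01 j with h | h <;> rw [h] <;> linarith [le_abs_self (z j), abs_nonneg (z j)]
  have hsub : ∑ j ∈ insert t (Iio t), (z j - y j) * y j ≤ (z - y) ⬝ᵥ y :=
    sum_le_sum_of_subset_of_nonneg (subset_univ _) fun j _ hj => by simp [hyout j hj]
  have hmlow : m ∈ Iio t := mem_Iio.2 hmt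
  rw [sum_insert (by simp), ← add_sum_erase _ _ hmlow, hyt, hym] at hsub
  rw [← add_sum_erase _ _ hmlow] at hlt
  linarith [le_abs_self (z m)]

theorem IsIrreducibleVec.le_three_of_tight (hσ : IsChangemaker σ) (hirr : IsIrreducibleVec σ z)
    (hz : σ ⬝ᵥ z = 0) {t : Fin r} (ht : 0 < t.val) (htight : σ t = 1 + ∑ j ∈ Iio t, σ j)
    (hlow : ∀ j < t, 3 ≤ z j) : z t ≤ 3 := by
  by_contra! hzt
  obtain ⟨u, htu, hzu, hmid⟩ := exists_gt_le_two_of_dotProduct_eq_zero hσ.pos hz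
    fun j hj => hj.lt_or_eq.elim (hlow j) fun h => by rw [h]; omega
  obtain ⟨k, c, hk1, hkz, hc0, hcz, hσu⟩ := hσ.exists_eq_mul_tight_add_sum ht htight htu
    (fun j hju hjt => hjt.lt_or_gt.elim (hlow j) fun h => hmid j h hju) hzt
  set y : Fin r → ℤ := Pi.single t k - Pi.single u 1 + c
  have hyt : y t = k := by simp [y, htu.ne, hc0 t (by simp)]
  have hyu : y u = -1 := by simp [y, htu.ne', hc0 u (by simp)]
  have hσy : σ ⬝ᵥ y = 0 := by
    have hσc : σ ⬝ᵥ c = ∑ j ∈ (Iio u).erase t, σ j * c j :=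
      (sum_subset (subset_univ _) fun j _ hj => by simp [hc0 j hj]).symm
    simp only [y, dotProduct_add, dotProduct_sub, dotProduct_single, hσc]
    linarith
  have hneg := hirr.sub_dotProduct_lt_zero hz hσy (fun h => by simp [h] at hyu)
    fun h => by rw [← h, hyt] at hkz; omega
  have hrest : ∀ j ∉ ({t, u} : Finset (Fin r)), 0 ≤ (z j - y j) * y j := fun j hj => by
    rw [mem_insert, mem_singleton, not_or] at hj
    have hyj : y j = c j := by simp [y, hj.1, hj.2]
    rw [hyj]
    by_cases hjT : j ∈ (Iio u).erase t
    · exact mul_nonneg (by linarith [hcz j hjT]) (hcz j hjT).1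
    · simp [hc0 j hjT]
  have hsub : ∑ j ∈ {t, u}, (z j - y j) * y j ≤ (z - y) ⬝ᵥ y :=
    sum_le_sum_of_subset_of_nonneg (subset_univ _) fun j _ hj => hrest j hj
  rw [sum_pair htu.ne, hyt, hyu] at hsub
  -- `k (z t - k) ≥ z t - 1 ≥ 3` outweighs `-(z u + 1) ≥ -3`
  nlinarith [mul_nonneg (sub_nonneg.2 hk1) (by omega : (0 : ℤ) ≤ z t - k - 1)]

theorem IsIrreducibleVec.le_five_add_of_tight (hσ : IsChangemaker σ) (hirr : IsIrreducibleVec σ z)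
    (hz : σ ⬝ᵥ z = 0) {t : Fin r} (ht : 0 < t.val) (htight : σ t = 1 + ∑ j ∈ Iio t, σ j) :
    z t ≤ 5 + ∑ j ∈ Iio t, (|z j| + 1) := by
  by_cases h : ∃ m < t, z m ≤ 2
  · obtain ⟨m, hmt, hzm⟩ := h
    exact hirr.le_five_add_of_tight_of_le_two hσ hz htight hmt hzm
  · have := hirr.le_three_of_tight hσ hz ht htight fun j hj => by
      by_contra! hzj; exact h ⟨j, hj, by omega⟩
    linarith [sum_nonneg fun j (_ : j ∈ Iio t) => (by positivity : (0 : ℤ) ≤ |z j| + 1)]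

theorem IsIrreducibleVec.abs_le_sum_abs_add_one (hirr : IsIrreducibleVec σ z)
    (hz : σ ⬝ᵥ z = 0) {k : Fin r} (hk : σ k ≠ 0) {A : Finset (Fin r)} (hkA : k ∉ A)
    (hA : σ k = ∑ i ∈ A, σ i) : |z k| ≤ ∑ i ∈ A, (|z i| + 1) := by
  have h := hirr.le_sum_abs_add_one hz hk hkA hA
  have h' := hirr.neg.le_sum_abs_add_one (by rw [dotProduct_neg, hz, neg_zero]) hk hkA hA
  simp only [Pi.neg_apply, abs_neg] at h'
  exact abs_le.2 ⟨by linarith, h⟩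

theorem IsIrreducibleVec.abs_le_five_add_of_tight (hσ : IsChangemaker σ)
    (hirr : IsIrreducibleVec σ z) (hz : σ ⬝ᵥ z = 0) {t : Fin r} (ht : 0 < t.val)
    (htight : σ t = 1 + ∑ j ∈ Iio t, σ j) : |z t| ≤ 5 + ∑ j ∈ Iio t, (|z j| + 1) := by
  have h := hirr.le_five_add_of_tight hσ hz ht htight
  have h' := hirr.neg.le_five_add_of_tight hσ (by rw [dotProduct_neg, hz, neg_zero]) ht htight
  simp only [Pi.neg_apply, abs_neg] at h'
  exact abs_le.2 ⟨by linarith, h⟩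

end Irreducible

theorem irreducible_coefficient_bounds_general
    (r : ℕ) (σ : Fin r → ℤ) (hcm : IsChangemaker σ)
    (z : Fin r → ℤ) (hz : dotInt σ z = 0) (hirr : IsIrreducibleVec σ z) :
    (∀ k : Fin r, 1 < σ k →
      σ k ≠ 1 + ∑ j ∈ Finset.univ.filter (fun j : Fin r => j < k), σ j →
      ∀ A : Finset (Fin r), (∀ i ∈ A, i < k) → σ k = ∑ i ∈ A, σ i →
        |z k| ≤ ∑ i ∈ A, (|z i| + 1)) ∧
    (∀ k : Fin r, 0 < k.val →
      σ k = 1 + ∑ j ∈ Finset.univ.filter (fun j : Fin r => j < k), σ j →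
      |z k| ≤ 5 + ∑ j ∈ Finset.univ.filter (fun j : Fin r => j < k), (|z j| + 1)) := by
  simp only [filter_gt_eq_Iio]
  exact ⟨fun k hk _ A hA hsum => hirr.abs_le_sum_abs_add_one hz (by omega)
      (fun hkA => lt_irrefl k (hA k hkA)) hsum,
    fun k hk htight => hirr.abs_le_five_add_of_tight hcm hz hk htight⟩

theorem irreducible_coefficient_bounds
    (r : ℕ) (hr : 0 < r) (σ : Fin r → ℤ) (hcm : IsChangemaker σ)
    (hlast : ∀ i : Fin r, i.val = r - 1 → 2 ≤ σ i)
    (z : Fin r → ℤ) (hz : dotInt σ z = 0) (hirr : IsIrreducibleVec σ z) :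
    (∀ k : Fin r, 1 < σ k →
      σ k ≠ 1 + ∑ j ∈ Finset.univ.filter (fun j : Fin r => j < k), σ j →
      ∀ A : Finset (Fin r), (∀ i ∈ A, i < k) → σ k = ∑ i ∈ A, σ i →
        |z k| ≤ ∑ i ∈ A, (|z i| + 1)) ∧
    (∀ k : Fin r, 0 < k.val →
      σ k = 1 + ∑ j ∈ Finset.univ.filter (fun j : Fin r => j < k), σ j →
      |z k| ≤ 5 + ∑ j ∈ Finset.univ.filter (fun j : Fin r => j < k), (|z j| + 1)) :=
  irreducible_coefficient_bounds_general r σ hcm z hz hirr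
end
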